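/- arXiv:2604.11130 — 5 statements merged into one kernel-verified Lean document; each statement's English description precedes it below -/
import Mathlib

section
/- Let R : ℝ^d → ℝ^{d+1} be a linear map and Q ⊂ ℝ^d a bounded open cube. Then there exists a constant C depending only on p ∈ [1,∞) and d such that |R| ≤ C |Q|^{-1/d - 2/p} (∫_Q ∫_Q |R(x - y)|^p dx dy)^{1/p}, where |R| denotes the operator (or Frobenius) norm of R and |Q| the Lebesgue measure of Q. -/
open MeasureTheory

/-- An open cube in `ℝ^d` with lower corner `a` and side length `s`. -/
def cube {d : ℕ} (a : EuclideanSpace ℝ (Fin d)) (s : ℝ) :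
    Set (EuclideanSpace ℝ (Fin d)) :=
  {x | ∀ i, x i ∈ Set.Ioo (a i) (a i + s)}

section Helpers

open Set

lemma euc_pi_rep {d : ℕ} (c : EuclideanSpace ℝ (Fin d)) (t : ℝ) :
    {x : EuclideanSpace ℝ (Fin d) | ∀ i, x i ∈ Set.Ioo (c i) (c i + t)}
      = (MeasurableEquiv.toLp 2 (Fin d → ℝ)).symm ⁻¹' (Set.univ.pi fun i => Set.Ioo (c i) (c i + t)) := by
  ext x
  simp [Set.mem_pi, MeasurableEquiv.toLp_symm_apply]

lemma volume_euc_pi {d : ℕ} (c : EuclideanSpace ℝ (Fin d)) (t : ℝ) :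
    volume {x : EuclideanSpace ℝ (Fin d) | ∀ i, x i ∈ Set.Ioo (c i) (c i + t)}
      = ENNReal.ofReal t ^ d := by
  rw [euc_pi_rep, (EuclideanSpace.volume_preserving_symm_measurableEquiv_toLp (Fin d)).measure_preimage
    (MeasurableSet.univ_pi fun i => measurableSet_Ioo).nullMeasurableSet,
    volume_pi_pi]
  simp [Real.volume_Ioo]

lemma meas_euc_pi {d : ℕ} (c : EuclideanSpace ℝ (Fin d)) (t : ℝ) :
    MeasurableSet {x : EuclideanSpace ℝ (Fin d) | ∀ i, x i ∈ Set.Ioo (c i) (c i + t)} := by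
  rw [euc_pi_rep]
  exact (MeasurableEquiv.toLp 2 (Fin d → ℝ)).symm.measurable
    (MeasurableSet.univ_pi fun i => measurableSet_Ioo)

lemma euc_norm_le_sum {d : ℕ} (z : EuclideanSpace ℝ (Fin d)) : ‖z‖ ≤ ∑ i, |z i| := by
  rw [EuclideanSpace.norm_eq]
  calc Real.sqrt (∑ i, ‖z i‖ ^ 2) ≤ Real.sqrt ((∑ i, |z i|) ^ 2) := by
        apply Real.sqrt_le_sqrt
        simpa [abs_sq] using Finset.sum_sq_le_sq_sum_of_nonneg (f := fun i => |z i|)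
          (fun i _ => abs_nonneg _)
    _ = ∑ i, |z i| := Real.sqrt_sq (by positivity)

lemma euc_coord_le_norm {d : ℕ} (z : EuclideanSpace ℝ (Fin d)) (j : Fin d) : |z j| ≤ ‖z‖ := by
  have h : |z j| ^ 2 ≤ ‖z‖ ^ 2 := by
    rw [EuclideanSpace.norm_eq, Real.sq_sqrt (by positivity)]
    exact Finset.single_le_sum (f := fun i => ‖z i‖ ^ 2) (fun i _ => by positivity)
      (Finset.mem_univ j)
  calc |z j| = Real.sqrt (|z j| ^ 2) := (Real.sqrt_sq (abs_nonneg _)).symm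
    _ ≤ Real.sqrt (‖z‖ ^ 2) := Real.sqrt_le_sqrt h
    _ = ‖z‖ := Real.sqrt_sq (norm_nonneg _)

end Helpers

open scoped RealInnerProductSpace

set_option maxHeartbeats 1000000

/-- For a linear map `R : ℝ^d → ℝ^{d+1}` and a bounded open cube
`Q ⊂ ℝ^d`, there is a constant `C = C(p, d)` such that
`‖R‖ ≤ C |Q|^{-1/d - 2/p} (∫_Q ∫_Q ‖R(x - y)‖^p dx dy)^{1/p}`. -/
theorem norm_le_lp_variation (d : ℕ) (hd : 0 < d) (p : ℝ) (hp : 1 ≤ p) :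
    ∃ C : ℝ, 0 < C ∧
      ∀ (a : EuclideanSpace ℝ (Fin d)) (s : ℝ), 0 < s →
        ∀ R : EuclideanSpace ℝ (Fin d) →L[ℝ] EuclideanSpace ℝ (Fin (d + 1)),
          ‖R‖ ≤ C * (volume (cube a s)).toReal ^ (-(1 : ℝ) / d - 2 / p) *
            (∫ x in cube a s, ∫ y in cube a s, ‖R (x - y)‖ ^ p) ^ (1 / p) := by
  have hp0 : (0:ℝ) < p := lt_of_lt_of_le one_pos hp
  refine ⟨2 * 16 ^ d, by positivity, ?_⟩
  intro a s hs R
  set α : ℝ := -(1 : ℝ) / d - 2 / p with hα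
  set Q : Set (EuclideanSpace ℝ (Fin d)) := cube a s with hQdef
  set I : ℝ := ∫ x in Q, ∫ y in Q, ‖R (x - y)‖ ^ p with hIdef
  set M : ℝ := 2 * 16 ^ d * (volume Q).toReal ^ α * I ^ (1 / p) with hMdef
  -- basic facts about Q
  have hQrep : Q = {x : EuclideanSpace ℝ (Fin d) | ∀ i, x i ∈ Set.Ioo (a i) (a i + s)} := rfl
  have hQmeas : MeasurableSet Q := by rw [hQrep]; exact meas_euc_pi a s
  have hvolQ : volume Q = ENNReal.ofReal s ^ d := by rw [hQrep]; exact volume_euc_pi a s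
  have hvolQtop : volume Q ≠ ⊤ := by
    rw [hvolQ]; exact ENNReal.pow_ne_top ENNReal.ofReal_ne_top
  have hvolQtoReal : (volume Q).toReal = s ^ d := by
    rw [hvolQ, ENNReal.toReal_pow, ENNReal.toReal_ofReal hs.le]
  -- the integrand
  set F : EuclideanSpace ℝ (Fin d) → EuclideanSpace ℝ (Fin d) → ℝ :=
    fun x y => ‖R (x - y)‖ ^ p with hFdef
  have hFnonneg : ∀ x y, 0 ≤ F x y := fun x y => Real.rpow_nonneg (norm_nonneg _) p
  have hFcont : Continuous fun q : EuclideanSpace ℝ (Fin d) × EuclideanSpace ℝ (Fin d) =>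
      F q.1 q.2 := by
    apply Continuous.rpow_const
    · exact (R.continuous.comp (continuous_fst.sub continuous_snd)).norm
    · intro q; right; exact hp0.le
  set B : ℝ := (‖R‖ * (d * s)) ^ p with hBdef
  have hFbound : ∀ x ∈ Q, ∀ y ∈ Q, F x y ≤ B := by
    intro x hx y hy
    apply Real.rpow_le_rpow (norm_nonneg _) _ hp0.le
    calc ‖R (x - y)‖ ≤ ‖R‖ * ‖x - y‖ := R.le_opNorm _
      _ ≤ ‖R‖ * (d * s) := by
          apply mul_le_mul_of_nonneg_left _ (norm_nonneg R)
          calc ‖x - y‖ ≤ ∑ i, |(x - y) i| := euc_norm_le_sum _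
            _ ≤ ∑ _i : Fin d, s := by
                apply Finset.sum_le_sum
                intro i _
                have hxi := hx i
                have hyi := hy i
                simp only [Set.mem_Ioo] at hxi hyi
                have : (x - y) i = x i - y i := by simp
                rw [this, abs_le]
                constructor <;> linarith [hxi.1, hxi.2, hyi.1, hyi.2]
            _ = d * s := by simp [mul_comm]
  have hIntF : ∀ x ∈ Q, IntegrableOn (fun y => F x y) Q volume := by
    intro x hx
    apply Measure.integrableOn_of_bounded hvolQtop
      ((hFcont.comp (Continuous.prodMk_right x)).aestronglyMeasurable) (M := B)
    filter_upwards [ae_restrict_mem hQmeas] with y hy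
    show ‖F x y‖ ≤ B
    rw [Real.norm_of_nonneg (hFnonneg x y)]
    exact hFbound x hx y hy
  set φ : EuclideanSpace ℝ (Fin d) → ℝ := fun x => ∫ y in Q, F x y with hφdef
  have hφnonneg : ∀ x, 0 ≤ φ x := fun x => integral_nonneg fun y => hFnonneg x y
  have hφSM : StronglyMeasurable φ :=
    (hFcont.stronglyMeasurable).integral_prod_right' (ν := volume.restrict Q)
  have hφint : IntegrableOn φ Q volume := by
    apply Measure.integrableOn_of_bounded hvolQtop hφSM.aestronglyMeasurable
      (M := B * (volume Q).toReal)
    filter_upwards [ae_restrict_mem hQmeas] with x hx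
    rw [Real.norm_of_nonneg (hφnonneg x)]
    calc φ x ≤ ∫ _y in Q, B := by
          apply setIntegral_mono_on (hIntF x hx)
            (integrableOn_const hvolQtop) hQmeas
          intro y hy; exact hFbound x hx y hy
      _ = B * (volume Q).toReal := by rw [setIntegral_const, smul_eq_mul, mul_comm]; rfl
  have hI0 : 0 ≤ I := integral_nonneg fun x => hφnonneg x
  have hM0 : 0 ≤ M := by
    apply mul_nonneg (mul_nonneg (by positivity) (Real.rpow_nonneg ENNReal.toReal_nonneg _))
      (Real.rpow_nonneg hI0 _)
  -- main estimate for unit vectors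
  have key : ∀ u : EuclideanSpace ℝ (Fin d), ‖u‖ = 1 → ‖R u‖ ≤ M := by
    intro u hu
    by_cases hRu : R u = 0
    · rw [hRu, norm_zero]; exact hM0
    have hRun : (0:ℝ) < ‖R u‖ := norm_pos_iff.2 hRu
    set w : EuclideanSpace ℝ (Fin (d + 1)) := ‖R u‖⁻¹ • R u with hwdef
    have hw : ‖w‖ = 1 := by
      rw [hwdef, norm_smul, norm_inv, norm_norm, inv_mul_cancel₀ hRun.ne']
    set v : EuclideanSpace ℝ (Fin d) := (ContinuousLinearMap.adjoint R) w with hvdef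
    have hinner : ∀ z : EuclideanSpace ℝ (Fin d), ⟪R z, w⟫ = ∑ j, z j * v j := by
      intro z
      rw [← ContinuousLinearMap.adjoint_inner_right R z w, ← hvdef]
      simp [PiLp.inner_apply, RCLike.inner_apply, conj_trivial, mul_comm]
    set T : ℝ := ∑ j, |v j| with hTdef
    have hT0 : 0 ≤ T := Finset.sum_nonneg fun j _ => abs_nonneg _
    have hRuT : ‖R u‖ ≤ T := by
      have h1 : ⟪R u, w⟫ = ‖R u‖ := by
        rw [hwdef, real_inner_smul_right, real_inner_self_eq_norm_sq]
        field_simp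
      calc ‖R u‖ = ∑ j, u j * v j := by rw [← hinner u, h1]
        _ ≤ ∑ j, |u j * v j| := Finset.sum_le_sum fun j _ => le_abs_self _
        _ ≤ ∑ j, |v j| := by
            apply Finset.sum_le_sum
            intro j _
            rw [abs_mul]
            calc |u j| * |v j| ≤ 1 * |v j| := by
                  apply mul_le_mul_of_nonneg_right _ (abs_nonneg _)
                  calc |u j| ≤ ‖u‖ := euc_coord_le_norm u j
                    _ = 1 := hu
              _ = |v j| := one_mul _
    -- the two corner sub-cubes
    set bx : EuclideanSpace ℝ (Fin d) := WithLp.toLp 2 (fun j => if 0 ≤ v j then a j + 3 * (s / 4) else a j)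
      with hbxdef
    set by' : EuclideanSpace ℝ (Fin d) := WithLp.toLp 2 (fun j => if 0 ≤ v j then a j else a j + 3 * (s / 4))
      with hbydef
    set SX : Set (EuclideanSpace ℝ (Fin d)) :=
      {x | ∀ i, x i ∈ Set.Ioo (bx i) (bx i + s / 4)} with hSXdef
    set SY : Set (EuclideanSpace ℝ (Fin d)) :=
      {x | ∀ i, x i ∈ Set.Ioo (by' i) (by' i + s / 4)} with hSYdef
    have hSXQ : SX ⊆ Q := by
      intro x hx i
      have h := hx i
      rw [hbxdef] at h
      simp only [Set.mem_Ioo] at h ⊢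
      by_cases hv : 0 ≤ v i <;> simp [hv] at h <;> constructor <;> linarith [h.1, h.2]
    have hSYQ : SY ⊆ Q := by
      intro x hx i
      have h := hx i
      rw [hbydef] at h
      simp only [Set.mem_Ioo] at h ⊢
      by_cases hv : 0 ≤ v i <;> simp [hv] at h <;> constructor <;> linarith [h.1, h.2]
    set m : ℝ := s / 2 * T with hmdef
    have hm0 : 0 ≤ m := by positivity
    have hlow : ∀ x ∈ SX, ∀ y ∈ SY, m ≤ ‖R (x - y)‖ := by
      intro x hx y hy
      have h1 : m ≤ ⟪R (x - y), w⟫ := by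
        rw [hinner (x - y), hmdef, hTdef, Finset.mul_sum]
        apply Finset.sum_le_sum
        intro j _
        have hxj := hx j
        have hyj := hy j
        rw [hbxdef] at hxj
        rw [hbydef] at hyj
        simp only [Set.mem_Ioo] at hxj hyj
        have hsub : (x - y) j = x j - y j := by simp
        rw [hsub]
        by_cases hv : 0 ≤ v j
        · simp only [WithLp.ofLp_toLp, hv, if_true] at hxj hyj
          rw [abs_of_nonneg hv]
          nlinarith [hxj.1, hxj.2, hyj.1, hyj.2]
        · push_neg at hv
          simp only [WithLp.ofLp_toLp, hv.not_ge, if_false] at hxj hyj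
          rw [abs_of_neg hv]
          nlinarith [hxj.1, hxj.2, hyj.1, hyj.2]
      calc m ≤ ⟪R (x - y), w⟫ := h1
        _ ≤ ‖R (x - y)‖ * ‖w‖ := real_inner_le_norm _ _
        _ = ‖R (x - y)‖ := by rw [hw, mul_one]
    -- measurability and volumes of the corner cubes
    have hSXmeas : MeasurableSet SX := meas_euc_pi bx (s / 4)
    have hSYmeas : MeasurableSet SY := meas_euc_pi by' (s / 4)
    have hvolSX : volume SX = ENNReal.ofReal (s / 4) ^ d := volume_euc_pi bx (s / 4)
    have hvolSY : volume SY = ENNReal.ofReal (s / 4) ^ d := volume_euc_pi by' (s / 4)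
    have hvolSXtop : volume SX ≠ ⊤ := by
      rw [hvolSX]; exact ENNReal.pow_ne_top ENNReal.ofReal_ne_top
    have hvolSYtop : volume SY ≠ ⊤ := by
      rw [hvolSY]; exact ENNReal.pow_ne_top ENNReal.ofReal_ne_top
    have hvolSXtoReal : (volume SX).toReal = (s / 4) ^ d := by
      rw [hvolSX, ENNReal.toReal_pow, ENNReal.toReal_ofReal (by positivity)]
    have hvolSYtoReal : (volume SY).toReal = (s / 4) ^ d := by
      rw [hvolSY, ENNReal.toReal_pow, ENNReal.toReal_ofReal (by positivity)]
    -- inner integral lower bound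
    have hstep_inner : ∀ x ∈ SX, m ^ p * (s / 4) ^ d ≤ φ x := by
      intro x hx
      calc m ^ p * (s / 4) ^ d = m ^ p * (volume SY).toReal := by rw [hvolSYtoReal]
        _ ≤ ∫ y in SY, F x y := by
            rw [mul_comm, ← smul_eq_mul]
            apply setIntegral_ge_of_const_le hSYmeas hvolSYtop
            · intro y hy
              exact Real.rpow_le_rpow hm0 (hlow x hx y hy) hp0.le
            · exact (hIntF x (hSXQ hx)).mono_set hSYQ
        _ ≤ φ x := by
            apply setIntegral_mono_set (hIntF x (hSXQ hx))
            · filter_upwards with y using hFnonneg x y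
            · exact HasSubset.Subset.eventuallyLE hSYQ
    -- outer integral lower bound
    have hstepI : m ^ p * (s / 4) ^ d * (s / 4) ^ d ≤ I := by
      calc m ^ p * (s / 4) ^ d * (s / 4) ^ d
          = m ^ p * (s / 4) ^ d * (volume SX).toReal := by rw [hvolSXtoReal]
        _ ≤ ∫ x in SX, φ x := by
            rw [mul_comm, ← smul_eq_mul]
            apply setIntegral_ge_of_const_le hSXmeas hvolSXtop hstep_inner
              (hφint.mono_set hSXQ)
        _ ≤ I := by
            apply setIntegral_mono_set hφint
            · filter_upwards with x using hφnonneg x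
            · exact HasSubset.Subset.eventuallyLE hSXQ
    -- convert to rpow form
    have hkey1 : (s / 4) ^ ((2 * d : ℕ) : ℝ) * m ^ p ≤ I := by
      calc (s / 4) ^ ((2 * d : ℕ) : ℝ) * m ^ p
          = (s / 4) ^ (2 * d : ℕ) * m ^ p := by rw [Real.rpow_natCast]
        _ = m ^ p * (s / 4) ^ d * (s / 4) ^ d := by rw [two_mul, pow_add]; ring
        _ ≤ I := hstepI
    have hIp : (s / 4) ^ (((2 * d : ℕ) : ℝ) / p) * m ≤ I ^ (1 / p) := by
      have h2 := Real.rpow_le_rpow (by positivity) hkey1 (by positivity : (0:ℝ) ≤ 1 / p)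
      calc (s / 4) ^ (((2 * d : ℕ) : ℝ) / p) * m
          = ((s / 4) ^ ((2 * d : ℕ) : ℝ) * m ^ p) ^ (1 / p) := by
            rw [Real.mul_rpow (by positivity) (by positivity),
              ← Real.rpow_mul (by positivity), ← Real.rpow_mul hm0,
              mul_one_div, mul_one_div, div_self hp0.ne', Real.rpow_one]
        _ ≤ I ^ (1 / p) := h2
    -- final arithmetic
    have hc' : (1:ℝ) ≤ 2 * 16 ^ d * (volume Q).toReal ^ α *
        ((s / 4) ^ (((2 * d : ℕ) : ℝ) / p) * (s / 2)) := by
      have e1 : (volume Q).toReal ^ α = s ^ ((d : ℝ) * α) := by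
        rw [hvolQtoReal, ← Real.rpow_natCast s d, ← Real.rpow_mul hs.le]
      have e2 : (s / 4 : ℝ) ^ (((2 * d : ℕ) : ℝ) / p)
          = s ^ (((2 * d : ℕ) : ℝ) / p) * (4 : ℝ) ^ (-(((2 * d : ℕ) : ℝ) / p)) := by
        rw [Real.div_rpow hs.le (by norm_num), Real.rpow_neg (by norm_num), div_eq_mul_inv]
      have e3 : s ^ ((d : ℝ) * α) * (s ^ (((2 * d : ℕ) : ℝ) / p) * s) = 1 := by
        nth_rewrite 3 [← Real.rpow_one s]
        rw [← Real.rpow_add hs, ← Real.rpow_add hs]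
        have hexp : (d : ℝ) * α + ((((2 * d : ℕ) : ℝ)) / p + 1) = 0 := by
          rw [hα]
          have hd0 : (d : ℝ) ≠ 0 := Nat.cast_ne_zero.2 hd.ne'
          push_cast
          field_simp
          ring
        rw [hexp, Real.rpow_zero]
      have e4 : 2 * 16 ^ d * (volume Q).toReal ^ α *
          ((s / 4) ^ (((2 * d : ℕ) : ℝ) / p) * (s / 2))
          = 16 ^ d * (4 : ℝ) ^ (-(((2 * d : ℕ) : ℝ) / p)) := by
        rw [e1, e2]
        calc 2 * 16 ^ d * s ^ ((d : ℝ) * α) *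
              (s ^ (((2 * d : ℕ) : ℝ) / p) * (4 : ℝ) ^ (-(((2 * d : ℕ) : ℝ) / p)) * (s / 2))
            = 16 ^ d * (4 : ℝ) ^ (-(((2 * d : ℕ) : ℝ) / p)) *
              (s ^ ((d : ℝ) * α) * (s ^ (((2 * d : ℕ) : ℝ) / p) * s)) := by ring
          _ = 16 ^ d * (4 : ℝ) ^ (-(((2 * d : ℕ) : ℝ) / p)) := by rw [e3, mul_one]
      rw [e4]
      have h5 : ((16 : ℝ) ^ d)⁻¹ ≤ (4 : ℝ) ^ (-(((2 * d : ℕ) : ℝ) / p)) := by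
        have h6 : (4 : ℝ) ^ (-((2 * d : ℕ) : ℝ)) ≤ (4 : ℝ) ^ (-(((2 * d : ℕ) : ℝ) / p)) := by
          apply Real.rpow_le_rpow_of_exponent_le (by norm_num)
          have : (((2 * d : ℕ) : ℝ)) / p ≤ ((2 * d : ℕ) : ℝ) :=
            div_le_self (by positivity) hp
          linarith
        calc ((16 : ℝ) ^ d)⁻¹ = (4 : ℝ) ^ (-((2 * d : ℕ) : ℝ)) := by
              rw [Real.rpow_neg (by norm_num), Real.rpow_natCast, pow_mul]
              norm_num
          _ ≤ _ := h6
      calc (1:ℝ) = 16 ^ d * ((16 : ℝ) ^ d)⁻¹ := by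
            rw [mul_inv_cancel₀ (by positivity)]
        _ ≤ 16 ^ d * (4 : ℝ) ^ (-(((2 * d : ℕ) : ℝ) / p)) := by
            apply mul_le_mul_of_nonneg_left h5 (by positivity)
    calc ‖R u‖ ≤ T := hRuT
      _ = 1 * T := (one_mul T).symm
      _ ≤ 2 * 16 ^ d * (volume Q).toReal ^ α *
            ((s / 4) ^ (((2 * d : ℕ) : ℝ) / p) * (s / 2)) * T :=
          mul_le_mul_of_nonneg_right hc' hT0
      _ = 2 * 16 ^ d * (volume Q).toReal ^ α *
            ((s / 4) ^ (((2 * d : ℕ) : ℝ) / p) * m) := by rw [hmdef]; ring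
      _ ≤ 2 * 16 ^ d * (volume Q).toReal ^ α * I ^ (1 / p) := by
          apply mul_le_mul_of_nonneg_left hIp
          apply mul_nonneg (by positivity) (Real.rpow_nonneg ENNReal.toReal_nonneg _)
      _ = M := rfl
  -- conclude via opNorm_le_bound
  apply ContinuousLinearMap.opNorm_le_bound R hM0
  intro x
  by_cases hx : x = 0
  · simp [hx]
  · have hxn : (0:ℝ) < ‖x‖ := norm_pos_iff.2 hx
    have hu : ‖(‖x‖⁻¹ • x)‖ = 1 := norm_smul_inv_norm hx
    have h := key (‖x‖⁻¹ • x) hu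
    rw [_root_.map_smul, norm_smul, norm_inv, norm_norm] at h
    calc ‖R x‖ = ‖x‖ * (‖x‖⁻¹ * ‖R x‖) := by field_simp
      _ ≤ ‖x‖ * M := mul_le_mul_of_nonneg_left h hxn.le
      _ = M * ‖x‖ := mul_comm _ _
end

section
/- Let g₀ be an inner product on ℝ^d, let n₀, n ∈ ℝ^{d+1} be unit vectors, let Π := n^⊥ and Π₀ := n₀^⊥, and let T : ℝ^d → ℝ^{d+1} be a linear map with image contained in Π. If P is the orthogonal projection of ℝ^{d+1} onto Π₀, then |P∘T − T|_{g₀, e_{d+1}} ≤ |T|_{g₀, e_{d+1}} · |n₀ − n|, where |·|_{g₀, e_{d+1}} denotes the Frobenius norm computed with a g₀-orthonormal basis of ℝ^d. -/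
open scoped RealInnerProductSpace

lemma sqrt_le_sqrt_mul_of_le {A B c : ℝ} (hB : 0 ≤ B) (h : A ≤ B * c ^ 2) (hc : 0 ≤ c) :
    Real.sqrt A ≤ Real.sqrt B * c := by
  refine le_trans (Real.sqrt_le_sqrt h) ?_
  rw [Real.sqrt_mul hB, Real.sqrt_sq hc]

/-- Let `(V, g₀)` be a `d`-dimensional real inner product space
(modelling `(ℝ^d, g₀)`, with `b` a `g₀`-orthonormal basis), let `n₀, n ∈ ℝ^{d+1}`
be unit vectors, `Π := span(n)ᗮ`, `Π₀ := span(n₀)ᗮ`, and let `T : V → ℝ^{d+1}` be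
linear with image in `Π`.  If `P` is the orthogonal projection onto `Π₀`, then
`|P∘T − T|_{g₀,e} ≤ |T|_{g₀,e} · |n₀ − n|` in the Frobenius norm computed with the
`g₀`-orthonormal basis `b`. -/
theorem projection_error_estimate {d : ℕ} {V : Type*}
    [NormedAddCommGroup V] [InnerProductSpace ℝ V]
    (b : OrthonormalBasis (Fin d) ℝ V)
    (n n₀ : EuclideanSpace ℝ (Fin (d + 1))) (hn : ‖n‖ = 1) (hn₀ : ‖n₀‖ = 1)
    (T : V →ₗ[ℝ] EuclideanSpace ℝ (Fin (d + 1)))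
    (hT : ∀ v : V, ⟪T v, n⟫ = 0) :
    Real.sqrt (∑ i, ‖((Submodule.orthogonalProjection (ℝ ∙ n₀)ᗮ (T (b i)) :
        EuclideanSpace ℝ (Fin (d + 1)))) - T (b i)‖ ^ 2) ≤
      Real.sqrt (∑ i, ‖T (b i)‖ ^ 2) * ‖n₀ - n‖ := by
  have key : ∀ i : Fin d,
      ‖((Submodule.orthogonalProjection (ℝ ∙ n₀)ᗮ (T (b i)) :
        EuclideanSpace ℝ (Fin (d + 1)))) - T (b i)‖ ≤ ‖T (b i)‖ * ‖n₀ - n‖ := by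
    intro i
    set x := T (b i) with hx
    have h1 : ((Submodule.orthogonalProjection (ℝ ∙ n₀)ᗮ x : EuclideanSpace ℝ (Fin (d + 1)))) - x
        = -(⟪n₀, x⟫ • n₀) := by
      rw [show ((Submodule.orthogonalProjection (ℝ ∙ n₀)ᗮ x : EuclideanSpace ℝ (Fin (d + 1)))) =
          (ℝ ∙ n₀)ᗮ.starProjection x from rfl,
        Submodule.starProjection_orthogonal_val, Submodule.starProjection_unit_singleton ℝ hn₀]
      abel
    rw [h1, norm_neg, norm_smul, Real.norm_eq_abs, hn₀, mul_one]
    have h2 : ⟪n₀, x⟫ = ⟪n₀ - n, x⟫ := by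
      rw [inner_sub_left]
      have := hT (b i)
      rw [← hx, real_inner_comm] at this
      rw [this]; ring
    rw [h2]
    calc |⟪n₀ - n, x⟫| ≤ ‖n₀ - n‖ * ‖x‖ := abs_real_inner_le_norm _ _
      _ = ‖x‖ * ‖n₀ - n‖ := mul_comm _ _
  refine sqrt_le_sqrt_mul_of_le (Finset.sum_nonneg fun i _ => sq_nonneg _) ?_ (norm_nonneg _)
  rw [Finset.sum_mul]
  apply Finset.sum_le_sum
  intro i _
  rw [← mul_pow]
  exact pow_le_pow_left₀ (norm_nonneg _) (key i) 2
end

section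
/- Let H be a symmetric positive definite (d+1)×(d+1) matrix with (1+ε)^{-1} I < H < (1+ε) I for some ε ∈ (0,1), defining an inner product h(v,w) = vᵀ H w on ℝ^{d+1}. Then there exists a linear isometry S from (ℝ^{d+1}, h) to (ℝ^{d+1}, Euclidean) such that |Id − S|_{h, euc} ≤ 2 √(d+1) ε, where the Frobenius norm is taken with respect to an h-orthonormal basis of the domain. -/
open scoped RealInnerProductSpace

/-- Let `H` be a symmetric `(d+1)×(d+1)` matrix with
`(1+ε)⁻¹ I < H < (1+ε) I` (as quadratic forms) for some `ε ∈ (0,1)`, defining the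
inner product `h(v,w) = vᵀ H w` on `ℝ^{d+1}`.  Then there is a linear isometry `S`
from `(ℝ^{d+1}, h)` to Euclidean `ℝ^{d+1}` with `|Id − S|_{h,euc} ≤ 2 √(d+1) ε`,
the Frobenius norm being taken with respect to any `h`-orthonormal basis. -/
theorem exists_isometry_close_to_id (d : ℕ) (ε : ℝ) (hε : ε ∈ Set.Ioo (0 : ℝ) 1)
    (H : Matrix (Fin (d + 1)) (Fin (d + 1)) ℝ) (hsymm : H.IsSymm)
    (hlow : ∀ v : EuclideanSpace ℝ (Fin (d + 1)), v ≠ 0 →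
      ‖v‖ ^ 2 / (1 + ε) < ∑ i, ∑ j, v i * H i j * v j)
    (hup : ∀ v : EuclideanSpace ℝ (Fin (d + 1)), v ≠ 0 →
      (∑ i, ∑ j, v i * H i j * v j) < (1 + ε) * ‖v‖ ^ 2) :
    ∃ S : EuclideanSpace ℝ (Fin (d + 1)) →ₗ[ℝ] EuclideanSpace ℝ (Fin (d + 1)),
      (∀ v w : EuclideanSpace ℝ (Fin (d + 1)),
        ⟪S v, S w⟫ = ∑ i, ∑ j, v i * H i j * w j) ∧
      ∀ b : Fin (d + 1) → EuclideanSpace ℝ (Fin (d + 1)),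
        (∀ i j, (∑ k, ∑ l, (b i) k * H k l * (b j) l) = if i = j then 1 else 0) →
        Real.sqrt (∑ i, ‖b i - S (b i)‖ ^ 2) ≤ 2 * Real.sqrt (d + 1) * ε := by
  obtain ⟨hε0, hε1⟩ := hε
  have hε1' : (0:ℝ) < 1 + ε := by linarith
  set T := Matrix.toEuclideanLin H with hTdef
  have hTin : ∀ v w : EuclideanSpace ℝ (Fin (d+1)),
      ⟪v, T w⟫ = ∑ i, ∑ j, v i * H i j * w j := by
    intro v w
    simp [hTdef, PiLp.inner_apply, Matrix.toEuclideanLin_apply, Matrix.mulVec,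
      dotProduct, Finset.mul_sum, mul_assoc, Finset.sum_mul]
    exact Finset.sum_congr rfl fun _ _ => Finset.sum_congr rfl fun _ _ => by ring
  have hT : T.IsSymmetric := by
    intro v w
    rw [real_inner_comm w ((T) v), hTin, hTin, Finset.sum_comm]
    refine Finset.sum_congr rfl fun i _ => Finset.sum_congr rfl fun j _ => ?_
    rw [hsymm.apply i j]; ring
  have hdim : Module.finrank ℝ (EuclideanSpace ℝ (Fin (d+1))) = d + 1 :=
    finrank_euclideanSpace_fin
  set e := hT.eigenvectorBasis hdim with hedef
  set μ := hT.eigenvalues hdim with hμdef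
  have happ : ∀ i, T (e i) = μ i • e i := fun i => hT.apply_eigenvectorBasis hdim i
  -- eigenvalue bounds
  have hμmem : ∀ i, 1/(1+ε) < μ i ∧ μ i < 1+ε := by
    intro i
    have hnorm : ‖e i‖ = 1 := e.orthonormal.1 i
    have hne : e i ≠ 0 := by
      intro h0; rw [h0, norm_zero] at hnorm; norm_num at hnorm
    have hval : (∑ k, ∑ l, (e i) k * H k l * (e i) l) = μ i := by
      rw [← hTin, happ, real_inner_smul_right, real_inner_self_eq_norm_sq, hnorm]
      ring
    constructor
    · have h := hlow (e i) hne
      rw [hval, hnorm] at h; simpa using h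
    · have h := hup (e i) hne
      rw [hval, hnorm] at h; simpa using h
  -- the isometry
  let S : EuclideanSpace ℝ (Fin (d+1)) →ₗ[ℝ] EuclideanSpace ℝ (Fin (d+1)) :=
    { toFun := fun v => ∑ j, (Real.sqrt (μ j) * e.repr v j) • e j
      map_add' := by
        intro v w
        simp [map_add, mul_add, add_smul, Finset.sum_add_distrib]
      map_smul' := by
        intro c v
        simp only [map_smul, PiLp.smul_apply, smul_eq_mul, RingHom.id_apply,
          Finset.smul_sum, smul_smul]
        refine Finset.sum_congr rfl fun j _ => ?_
        congr 1; ring }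
  have hSapp : ∀ v, S v = ∑ j, (Real.sqrt (μ j) * e.repr v j) • e j := fun _ => rfl
  have hpair : ∀ c c' : Fin (d+1) → ℝ,
      ⟪∑ j, c j • e j, ∑ j, c' j • e j⟫ = ∑ j, c j * c' j := by
    intro c c'
    have horth := orthonormal_iff_ite.mp e.orthonormal
    simp only [sum_inner, inner_sum, real_inner_smul_left, real_inner_smul_right, horth]
    simp only [mul_ite, mul_one, mul_zero, Finset.sum_ite_eq, Finset.sum_ite_eq',
      Finset.mem_univ, if_true]
    exact Finset.sum_congr rfl fun x _ => mul_comm _ _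
  have hμpos : ∀ j, 0 < μ j := by
    intro j
    have := (hμmem j).1
    have : (0:ℝ) < 1/(1+ε) := by positivity
    linarith [(hμmem j).1]
  have hSin : ∀ v w : EuclideanSpace ℝ (Fin (d+1)),
      ⟪S v, S w⟫ = ∑ i, ∑ j, v i * H i j * w j := by
    intro v w
    rw [← hTin]
    have hTw : T w = ∑ j, (μ j * e.repr w j) • e j := by
      conv_lhs => rw [← e.sum_repr w]
      rw [map_sum]
      refine Finset.sum_congr rfl fun j _ => ?_
      rw [map_smul, happ, smul_smul]
      congr 1; ring
    have h1 : ⟪S v, S w⟫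
        = ∑ j, (Real.sqrt (μ j) * e.repr v j) * (Real.sqrt (μ j) * e.repr w j) :=
      hpair _ _
    have h2 : ⟪v, T w⟫ = ∑ j, e.repr v j * (μ j * e.repr w j) := by
      conv_lhs => rw [← e.sum_repr v, hTw]
      exact hpair _ _
    rw [h1, h2]
    refine Finset.sum_congr rfl fun j _ => ?_
    have hs : Real.sqrt (μ j) * Real.sqrt (μ j) = μ j :=
      Real.mul_self_sqrt (hμpos j).le
    linear_combination (e.repr v j * e.repr w j) * hs
  refine ⟨S, hSin, ?_⟩
  -- second part
  have key : ∀ v : EuclideanSpace ℝ (Fin (d+1)),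
      ‖v - S v‖ ^ 2 = ∑ j, (1 - Real.sqrt (μ j))^2 * (e.repr v j)^2 := by
    intro v
    have hv : v - S v = ∑ j, ((1 - Real.sqrt (μ j)) * e.repr v j) • e j := by
      calc v - S v
          = ∑ j, e.repr v j • e j - ∑ j, (Real.sqrt (μ j) * e.repr v j) • e j := by
            rw [e.sum_repr v]; rfl
        _ = ∑ j, ((1 - Real.sqrt (μ j)) * e.repr v j) • e j := by
            rw [← Finset.sum_sub_distrib]
            refine Finset.sum_congr rfl fun j _ => ?_
            rw [← sub_smul]; congr 1; ring
    rw [← real_inner_self_eq_norm_sq, hv, hpair]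
    exact Finset.sum_congr rfl fun j _ => by ring
  have parseval : ∀ v : EuclideanSpace ℝ (Fin (d+1)),
      ‖v‖ ^ 2 = ∑ j, (e.repr v j)^2 := by
    intro v
    rw [← real_inner_self_eq_norm_sq]
    conv_lhs => rw [← e.sum_repr v]
    rw [hpair]
    exact Finset.sum_congr rfl fun j _ => (sq _).symm
  have hsq : ∀ j, (1 - Real.sqrt (μ j))^2 ≤ ε^2 := by
    intro j
    obtain ⟨h1, h2⟩ := hμmem j
    have hs1 : Real.sqrt (μ j) ≤ 1 + ε := by
      have hle : Real.sqrt (μ j) ≤ Real.sqrt (1+ε) := Real.sqrt_le_sqrt h2.le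
      have hq : Real.sqrt (1+ε) ≤ 1 + ε := by
        nlinarith [Real.sq_sqrt hε1'.le, Real.sqrt_nonneg (1+ε),
          sq_nonneg (Real.sqrt (1+ε) - 1)]
      linarith
    have hs2 : 1 - ε ≤ Real.sqrt (μ j) := by
      have h3 : (1-ε)^2 * (1+ε) ≤ 1 := by
        nlinarith [mul_nonneg (mul_nonneg hε0.le hε0.le) (sub_nonneg.mpr hε1.le)]
      have h4 : (1-ε)^2 ≤ 1/(1+ε) := by
        rw [le_div_iff₀ hε1']; exact h3
      have h5 : (1-ε)^2 ≤ μ j := by linarith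
      have h6 : Real.sqrt ((1-ε)^2) ≤ Real.sqrt (μ j) := Real.sqrt_le_sqrt h5
      rwa [Real.sqrt_sq (by linarith : (0:ℝ) ≤ 1 - ε)] at h6
    exact sq_le_sq' (by linarith) (by linarith)
  intro b hb
  have hterm : ∀ i, ‖b i - S (b i)‖ ^ 2 ≤ 2 * ε^2 := by
    intro i
    have hb1 : (∑ k, ∑ l, (b i) k * H k l * (b i) l) = 1 := by simpa using hb i i
    have hni : b i ≠ 0 := by
      intro h0
      have h := hb1
      simp [h0] at h
    have hnb : ‖b i‖ ^ 2 < 1 + ε := by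
      have h := hlow (b i) hni
      rw [hb1, div_lt_one hε1'] at h
      exact h
    rw [key]
    calc ∑ j, (1 - Real.sqrt (μ j))^2 * (e.repr (b i) j)^2
        ≤ ∑ j, ε^2 * (e.repr (b i) j)^2 :=
          Finset.sum_le_sum fun j _ =>
            mul_le_mul_of_nonneg_right (hsq j) (sq_nonneg _)
      _ = ε^2 * ‖b i‖ ^ 2 := by rw [parseval, Finset.mul_sum]
      _ ≤ 2 * ε^2 := by nlinarith [sq_nonneg ε]
  have hsum : ∑ i, ‖b i - S (b i)‖ ^ 2 ≤ (d+1 : ℝ) * (2*ε)^2 := by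
    calc ∑ i, ‖b i - S (b i)‖ ^ 2
        ≤ ∑ _i : Fin (d+1), 2 * ε^2 := Finset.sum_le_sum fun i _ => hterm i
      _ = (d+1 : ℝ) * (2 * ε^2) := by
          rw [Finset.sum_const, Finset.card_univ, Fintype.card_fin]
          ring
      _ ≤ (d+1 : ℝ) * (2*ε)^2 := by
          have : (2 : ℝ) * ε^2 ≤ (2*ε)^2 := by nlinarith [sq_nonneg ε]
          have hd : (0:ℝ) ≤ (d+1 : ℝ) := by positivity
          nlinarith
  calc Real.sqrt (∑ i, ‖b i - S (b i)‖ ^ 2)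
      ≤ Real.sqrt ((d+1 : ℝ) * (2*ε)^2) := Real.sqrt_le_sqrt hsum
    _ = Real.sqrt (d+1 : ℝ) * (2*ε) := by
        rw [Real.sqrt_mul (by positivity), Real.sqrt_sq (by positivity)]
    _ = 2 * Real.sqrt (d+1 : ℝ) * ε := by ring
end

section
/- Let h be an inner product on ℝ^{d+1} with (1+ε)^{-1} e ≤ h ≤ (1+ε) e for ε ∈ (0,1). Let Π ⊂ ℝ^{d+1} be a d-dimensional subspace, let n be the Euclidean unit normal to Π, and let ñ ∈ ℝ^{d+1} satisfy |ñ|_h = 1 and (ñ, w)_h = 0 for all w ∈ Π. If (ñ, n)_e > 0, then |n − ñ|_e ≤ C ε for a constant C depending only on d. -/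
open scoped RealInnerProductSpace
open Module

/-!
Since `|h(v, v) - |v|²| ≤ ε |v|²`, polarization makes `h` and `e` differ by at most `ε |u| |v|`
on every pair. Write `ñ = a n + w` with `a = (n, ñ)` and `w ∈ Π`, since `Π = n^⊥`. Then
`h(ñ, w) = 0` gives `|w|² = (ñ, w) ≤ ε |ñ| |w|`, so `w = O(ε)`; together with
`|ñ|² = 1 + O(ε)` and `a > 0` this forces `a = 1 + O(ε)`, and
`|n - ñ|² = (1 - a)² + |w|² ≤ 16 ε²`. The constant `C = 4` does not depend on `d`.
-/

theorem abs_sub_le_mul_of_div_le_of_le_mul {x y ε : ℝ} (hε : 0 ≤ ε)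
    (hlow : x / (1 + ε) ≤ y) (hhigh : y ≤ (1 + ε) * x) : |y - x| ≤ ε * x := by
  rw [div_le_iff₀ (by linarith)] at hlow
  rw [abs_le]
  constructor <;> nlinarith

theorem Submodule.eq_orthogonal_span_singleton {𝕜 F : Type*} [RCLike 𝕜] [NormedAddCommGroup F]
    [InnerProductSpace 𝕜 F] [FiniteDimensional 𝕜 F] {K : Submodule 𝕜 F}
    (hK : finrank 𝕜 K + 1 = finrank 𝕜 F) {v : F} (hv : v ≠ 0) (hvK : v ∈ Kᗮ) :
    K = (𝕜 ∙ v)ᗮ := by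
  refine Submodule.eq_of_le_of_finrank_eq ?_ ?_
  · exact K.le_orthogonal_orthogonal.trans
      (Submodule.orthogonal_le ((Submodule.span_singleton_le_iff_mem _ _).2 hvK))
  · have := Submodule.finrank_add_finrank_orthogonal (𝕜 ∙ v)
    rw [finrank_span_singleton hv] at this
    omega

section
variable {E : Type*} [NormedAddCommGroup E] [InnerProductSpace ℝ E]

theorem LinearMap.BilinForm.abs_apply_le_of_abs_apply_self_le {B : LinearMap.BilinForm ℝ E}
    (hB : ∀ u v, B u v = B v u) {ε : ℝ} (hBε : ∀ v, |B v v| ≤ ε * ‖v‖ ^ 2) (u v : E) :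
    |B u v| ≤ ε * ‖u‖ * ‖v‖ := by
  have polarization : ∀ x y, |B x y| ≤ ε * (‖x‖ ^ 2 + ‖y‖ ^ 2) / 2 := by
    intro x y
    have hpolar : 4 * B x y = B (x + y) (x + y) - B (x - y) (x - y) := by
      simp only [map_add, map_sub, LinearMap.add_apply, LinearMap.sub_apply, hB y x]
      ring
    have hpar : ‖x + y‖ ^ 2 + ‖x - y‖ ^ 2 = 2 * (‖x‖ ^ 2 + ‖y‖ ^ 2) := by
      rw [norm_add_sq_real, norm_sub_sq_real]; ring
    have := abs_sub (B (x + y) (x + y)) (B (x - y) (x - y))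
    rw [← hpolar, abs_mul, abs_of_pos four_pos] at this
    linarith [hBε (x + y), hBε (x - y), congrArg (ε * ·) hpar]
  rcases eq_or_ne u 0 with rfl | hu
  · simp
  rcases eq_or_ne v 0 with rfl | hv
  · simp
  -- rescale `u` and `v` to the same norm, where the polarization bound is sharp
  have hscaled := polarization (‖v‖ • u) (‖u‖ • v)
  simp only [map_smul, LinearMap.smul_apply, smul_eq_mul, norm_smul, norm_norm, abs_mul,
    abs_norm] at hscaled
  have : 0 < ‖u‖ * ‖v‖ := by positivity
  nlinarith

theorem inner_sub_inner_smul_self_eq_zero {n : E} (hn : ‖n‖ = 1) (x : E) :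
    ⟪n, x - ⟪n, x⟫ • n⟫ = 0 := by
  rw [inner_sub_right, real_inner_smul_right, real_inner_self_eq_norm_sq, hn]; ring

theorem norm_sq_eq_inner_sq_add_norm_sub_inner_smul_sq {n : E} (hn : ‖n‖ = 1) (x : E) :
    ‖x‖ ^ 2 = ⟪n, x⟫ ^ 2 + ‖x - ⟪n, x⟫ • n‖ ^ 2 := by
  conv_lhs => rw [← add_sub_cancel (⟪n, x⟫ • n) x]
  rw [norm_add_sq_real, real_inner_smul_left, inner_sub_inner_smul_self_eq_zero hn,
    norm_smul, hn, Real.norm_eq_abs, mul_one, sq_abs]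
  ring

theorem norm_sub_sq_eq_of_norm_eq_one {n : E} (hn : ‖n‖ = 1) (x : E) :
    ‖n - x‖ ^ 2 = (1 - ⟪n, x⟫) ^ 2 + ‖x - ⟪n, x⟫ • n‖ ^ 2 := by
  have : n - x = (1 - ⟪n, x⟫) • n - (x - ⟪n, x⟫ • n) := by
    rw [sub_smul, one_smul]; abel
  rw [this, norm_sub_sq_real, real_inner_smul_left, inner_sub_inner_smul_self_eq_zero hn,
    norm_smul, hn, Real.norm_eq_abs, mul_one, sq_abs]
  ring

theorem norm_sub_inner_smul_le_of_abs_inner_le {n x : E} (hn : ‖n‖ = 1) {ε : ℝ} (hε : 0 ≤ ε)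
    (h : |⟪x, x - ⟪n, x⟫ • n⟫| ≤ ε * ‖x‖ * ‖x - ⟪n, x⟫ • n‖) :
    ‖x - ⟪n, x⟫ • n‖ ≤ ε * ‖x‖ := by
  set w := x - ⟪n, x⟫ • n
  have hxw : ⟪x, w⟫ = ‖w‖ ^ 2 := by
    rw [← real_inner_self_eq_norm_sq, ← sub_add_cancel x (⟪n, x⟫ • n), inner_add_left,
      real_inner_smul_left, inner_sub_inner_smul_self_eq_zero hn]
    ring
  rw [hxw, abs_sq] at h
  rcases (norm_nonneg w).eq_or_lt with hw | hw
  · rw [← hw]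
    exact le_trans (by positivity) (mul_le_mul_of_nonneg_left (norm_nonneg x) hε)
  · nlinarith

theorem norm_sub_le_four_mul_of_inner_pos {n x : E} {ε : ℝ} (hε0 : 0 ≤ ε) (hε1 : ε ≤ 1)
    (hn : ‖n‖ = 1) (hpos : 0 < ⟪n, x⟫) (hlow : 1 ≤ (1 + ε) * ‖x‖ ^ 2)
    (hhigh : ‖x‖ ^ 2 ≤ 1 + ε) (hperp : ‖x - ⟪n, x⟫ • n‖ ≤ ε * ‖x‖) :
    ‖n - x‖ ≤ 4 * ε := by
  have hx := norm_sq_eq_inner_sq_add_norm_sub_inner_smul_sq hn x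
  set a := ⟪n, x⟫
  set r := ‖x - a • n‖
  have hr2 : r ^ 2 ≤ 2 * ε ^ 2 := by nlinarith [norm_nonneg (x - a • n)]
  have hup : a ^ 2 - 1 ≤ ε := by nlinarith
  have hdown : 1 - a ^ 2 ≤ 3 * ε := by nlinarith
  have ha : (1 - a) ^ 2 ≤ 9 * ε ^ 2 := by nlinarith [sq_nonneg (1 - a)]
  rw [← pow_le_pow_iff_left₀ (norm_nonneg _) (by positivity) two_ne_zero,
    norm_sub_sq_eq_of_norm_eq_one hn]
  nlinarith

end

/-- Let `h` be an inner product on `ℝ^{d+1}` with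
`(1+ε)⁻¹ e ≤ h ≤ (1+ε) e` for `ε ∈ (0,1)`.  Let `Π` be a `d`-dimensional subspace,
`n` its Euclidean unit normal, and `ñ` an `h`-unit vector that is `h`-orthogonal to
`Π`.  If `⟪ñ, n⟫_e > 0` (same orientation), then `‖n − ñ‖ ≤ C ε` with `C = C(d)`. -/
theorem normal_comparison (d : ℕ) :
    ∃ C : ℝ, 0 < C ∧
      ∀ (ε : ℝ), ε ∈ Set.Ioo (0 : ℝ) 1 →
      ∀ (h : EuclideanSpace ℝ (Fin (d + 1)) →ₗ[ℝ] EuclideanSpace ℝ (Fin (d + 1)) →ₗ[ℝ] ℝ),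
        (∀ v w, h v w = h w v) →
        (∀ v : EuclideanSpace ℝ (Fin (d + 1)), ‖v‖ ^ 2 / (1 + ε) ≤ h v v) →
        (∀ v : EuclideanSpace ℝ (Fin (d + 1)), h v v ≤ (1 + ε) * ‖v‖ ^ 2) →
      ∀ (P : Submodule ℝ (EuclideanSpace ℝ (Fin (d + 1)))), Module.finrank ℝ P = d →
      ∀ n ntilde : EuclideanSpace ℝ (Fin (d + 1)),
        ‖n‖ = 1 → n ∈ Pᗮ →
        h ntilde ntilde = 1 → (∀ w ∈ P, h ntilde w = 0) →
        0 < ⟪ntilde, n⟫ →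
        ‖n - ntilde‖ ≤ C * ε := by
  refine ⟨4, four_pos, ?_⟩
  intro ε ⟨hε0, hε1⟩ h hsym hlow hhigh P hP n ntilde hn hnP hntilde horth hpos
  set D := h - innerₗ (EuclideanSpace ℝ (Fin (d + 1)))
  have hD : ∀ u v, D u v = h u v - ⟪u, v⟫ := fun u v => rfl
  have hDsymm : ∀ u v, D u v = D v u := fun u v => by rw [hD, hD, hsym, real_inner_comm]
  have hDdiag : ∀ v, |D v v| ≤ ε * ‖v‖ ^ 2 := fun v => by
    rw [hD, real_inner_self_eq_norm_sq]
    exact abs_sub_le_mul_of_div_le_of_le_mul hε0.le (hlow v) (hhigh v)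
  have hP_eq : P = (ℝ ∙ n)ᗮ :=
    Submodule.eq_orthogonal_span_singleton (by rw [hP, finrank_euclideanSpace_fin])
      (norm_ne_zero_iff.1 (by simp [hn])) hnP
  set w := ntilde - ⟪n, ntilde⟫ • n
  have hwP : w ∈ P := by
    rw [hP_eq, Submodule.mem_orthogonal_singleton_iff_inner_right]
    exact inner_sub_inner_smul_self_eq_zero hn ntilde
  have hperp : ‖w‖ ≤ ε * ‖ntilde‖ := by
    refine norm_sub_inner_smul_le_of_abs_inner_le hn hε0.le ?_
    simpa [hD, horth w hwP] using
      LinearMap.BilinForm.abs_apply_le_of_abs_apply_self_le hDsymm hDdiag ntilde w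
  refine norm_sub_le_four_mul_of_inner_pos hε0.le hε1.le hn (by rwa [real_inner_comm]) ?_ ?_ hperp
  · simpa [hntilde] using hhigh ntilde
  · simpa [hntilde, div_le_one (by linarith : (0 : ℝ) < 1 + ε)] using hlow ntilde
end

section
/- Let g₀ be an inner product on ℝ^d, and let h be an inner product on ℝ^{d+1} with (1+ε)^{-1} e ≤ h ≤ (1+ε) e for ε ∈ (0,1). Then for every linear map A : ℝ^d → ℝ^{d+1}, dist_{g₀, e}(A, O(g₀, e)) ≤ √(1+ε) · dist_{g₀, h}(A, O(g₀, h)) + C ε, where O(g₀, k) denotes the set of linear isometries from (ℝ^d, g₀) into (ℝ^{d+1}, k), dist is measured in the Frobenius norm with a g₀-orthonormal basis, and C depends only on d. -/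
open scoped RealInnerProductSpace

lemma constr_bilin {d : ℕ} {V : Type} [NormedAddCommGroup V] [InnerProductSpace ℝ V]
    {E : Type} [AddCommGroup E] [Module ℝ E]
    (v : OrthonormalBasis (Fin d) ℝ V)
    (B : E →ₗ[ℝ] E →ₗ[ℝ] ℝ) (f : Fin d → E)
    (hf : ∀ i j, B (f i) (f j) = if i = j then (1:ℝ) else 0) (x y : V) :
    B (v.toBasis.constr ℝ f x) (v.toBasis.constr ℝ f y) = ⟪x, y⟫ := by
  rw [Module.Basis.constr_apply_fintype, Module.Basis.constr_apply_fintype]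
  simp only [map_sum, map_smul, LinearMap.sum_apply, LinearMap.smul_apply, smul_eq_mul, hf,
    mul_ite, mul_one, mul_zero, Finset.sum_ite_eq', Finset.mem_univ, if_true]
  have : ∀ z : V, ∀ i, v.toBasis.equivFun z i = ⟪v i, z⟫ := by
    intro z i
    rw [Module.Basis.equivFun_apply, OrthonormalBasis.coe_toBasis_repr_apply,
      OrthonormalBasis.repr_apply_apply]
  simp only [this]
  rw [← v.sum_inner_mul_inner x y]
  congr 1; ext i; rw [real_inner_comm x (v i)]; ring

lemma near_isometry_approx {d : ℕ} {V : Type} [NormedAddCommGroup V] [InnerProductSpace ℝ V]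
    (b : OrthonormalBasis (Fin d) ℝ V) {ε : ℝ} (hε0 : 0 < ε) (hε1 : ε < 1)
    (T : V →ₗ[ℝ] EuclideanSpace ℝ (Fin (d+1)))
    (hlow : ∀ x : V, ‖x‖^2 / (1+ε) ≤ ‖T x‖^2)
    (hhigh : ∀ x : V, ‖T x‖^2 ≤ (1+ε) * ‖x‖^2) :
    ∃ S : V →ₗ[ℝ] EuclideanSpace ℝ (Fin (d+1)),
      (∀ x y : V, ⟪S x, S y⟫ = ⟪x, y⟫) ∧ ∀ x : V, ‖T x - S x‖ ≤ ε * ‖x‖ := by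
  haveI : FiniteDimensional ℝ V := Module.Finite.of_basis b.toBasis
  have hd : Module.finrank ℝ V = d :=
    (Module.finrank_eq_card_basis b.toBasis).trans (Fintype.card_fin d)
  set G : V →ₗ[ℝ] V := (LinearMap.adjoint T) ∘ₗ T with hG
  have hGinner : ∀ x y : V, ⟪G x, y⟫ = ⟪T x, T y⟫ := by
    intro x y
    simp only [hG, LinearMap.comp_apply]
    rw [LinearMap.adjoint_inner_left]
  have hsym : G.IsSymmetric := by
    intro x y
    rw [hGinner]
    simp only [hG, LinearMap.comp_apply]
    rw [LinearMap.adjoint_inner_right]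
  set v := hsym.eigenvectorBasis hd with hv
  set μ := hsym.eigenvalues hd with hμ
  have happly : ∀ i, G (v i) = μ i • v i := fun i => hsym.apply_eigenvectorBasis hd i
  have hvij : ∀ i j : Fin d, ⟪v i, v j⟫ = if i = j then (1:ℝ) else 0 :=
    fun i j => orthonormal_iff_ite.mp v.orthonormal i j
  have hTv : ∀ i j : Fin d, ⟪T (v i), T (v j)⟫ = if i = j then μ i else 0 := by
    intro i j
    rw [← hGinner, happly, real_inner_smul_left, hvij]
    by_cases hij : i = j <;> simp [hij]
  have hμeq : ∀ i, μ i = ‖T (v i)‖^2 := by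
    intro i
    have := hTv i i
    rw [if_pos rfl, real_inner_self_eq_norm_sq] at this
    exact this.symm
  have hμlow : ∀ i, 1/(1+ε) ≤ μ i := by
    intro i
    have h1 := hlow (v i)
    rw [v.orthonormal.1 i] at h1
    rw [hμeq i]
    simpa using h1
  have hμhigh : ∀ i, μ i ≤ 1+ε := by
    intro i
    have h1 := hhigh (v i)
    rw [v.orthonormal.1 i] at h1
    rw [hμeq i]
    simpa using h1
  have hμpos : ∀ i, 0 < μ i := fun i => lt_of_lt_of_le (by positivity) (hμlow i)
  have hsqrtbound : ∀ i, |Real.sqrt (μ i) - 1| ≤ ε := by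
    intro i
    have hs0 : 0 ≤ Real.sqrt (μ i) := Real.sqrt_nonneg _
    have hs2 : Real.sqrt (μ i) ^ 2 = μ i := Real.sq_sqrt (hμpos i).le
    have hl : 1/(1+ε) ≤ μ i := hμlow i
    have hh : μ i ≤ 1+ε := hμhigh i
    have hl' : 1 ≤ μ i * (1+ε) := by
      rw [div_le_iff₀ (by positivity)] at hl
      linarith
    have h5 : (1-ε)^2 * (1+ε) ≤ 1 := by nlinarith [mul_nonneg (mul_nonneg hε0.le (by linarith : (0:ℝ) ≤ 1-ε)) (by linarith : (0:ℝ) ≤ 1+ε), sq_nonneg ε]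
    have h6 : (1-ε)^2 ≤ μ i := by nlinarith
    have h7 : 1-ε ≤ Real.sqrt (μ i) := (Real.le_sqrt (by linarith) (hμpos i).le).mpr h6
    have h8 : Real.sqrt (μ i) ≤ 1+ε := by
      nlinarith
    rw [abs_le]
    constructor <;> linarith
  set f : Fin d → EuclideanSpace ℝ (Fin (d+1)) :=
    fun i => (Real.sqrt (μ i))⁻¹ • T (v i) with hf
  have hforth : ∀ i j, ⟪f i, f j⟫ = if i = j then (1:ℝ) else 0 := by
    intro i j
    simp only [hf, real_inner_smul_left, real_inner_smul_right, hTv]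
    by_cases hij : i = j
    · subst hij
      have hsne : Real.sqrt (μ i) ≠ 0 := Real.sqrt_ne_zero'.mpr (hμpos i)
      have hs2 : Real.sqrt (μ i) ^ 2 = μ i := Real.sq_sqrt (hμpos i).le
      rw [if_pos rfl, if_pos rfl]
      field_simp
      exact hs2.symm
    · simp [hij]
  set S : V →ₗ[ℝ] EuclideanSpace ℝ (Fin (d+1)) := v.toBasis.constr ℝ f with hS
  have hSpres : ∀ x y : V, ⟪S x, S y⟫ = ⟪x, y⟫ := by
    intro x y
    have := constr_bilin v (innerₗ (EuclideanSpace ℝ (Fin (d+1)))) f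
      (fun i j => by rw [innerₗ_apply_apply, hforth]) x y
    exact this
  refine ⟨S, hSpres, fun x => ?_⟩
  -- expand x in eigenbasis
  have hTvf : ∀ i, T (v i) = Real.sqrt (μ i) • f i := by
    intro i
    rw [hf]
    rw [smul_smul]
    have hsne : Real.sqrt (μ i) ≠ 0 := Real.sqrt_ne_zero'.mpr (hμpos i)
    rw [mul_inv_cancel₀ hsne, one_smul]
  have hdiff : T x - S x = ∑ i, (v.repr x i * (Real.sqrt (μ i) - 1)) • f i := by
    have hx : x = ∑ i, v.repr x i • v i := (v.sum_repr x).symm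
    calc T x - S x = ∑ i, v.repr x i • (T (v i) - S (v i)) := by
          conv_lhs => rw [hx]
          rw [map_sum, map_sum, ← Finset.sum_sub_distrib]
          refine Finset.sum_congr rfl fun i _ => ?_
          rw [map_smul, map_smul, smul_sub]
      _ = ∑ i, (v.repr x i * (Real.sqrt (μ i) - 1)) • f i := by
          refine Finset.sum_congr rfl fun i _ => ?_
          have hSvi : S (v i) = f i := v.toBasis.constr_basis ℝ f i
          have h9 : Real.sqrt (μ i) • f i - f i = (Real.sqrt (μ i) - 1) • f i := by
            rw [sub_smul, one_smul]
          rw [hSvi, hTvf i, h9, smul_smul]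
  have horth : Orthonormal ℝ f := orthonormal_iff_ite.mpr hforth
  have hnormsq : ‖T x - S x‖^2 = ∑ i, (v.repr x i * (Real.sqrt (μ i) - 1))^2 := by
    rw [hdiff, ← real_inner_self_eq_norm_sq,
      horth.inner_sum (fun i => v.repr x i * (Real.sqrt (μ i) - 1))
        (fun i => v.repr x i * (Real.sqrt (μ i) - 1)) Finset.univ]
    simp [sq]
  have hxnorm : ∑ i, (v.repr x i)^2 = ‖x‖^2 := by
    have h1 : ‖v.repr x‖ = ‖x‖ := v.repr.norm_map x
    have h2 : ‖v.repr x‖ = Real.sqrt (∑ i, ‖v.repr x i‖^2) := EuclideanSpace.norm_eq _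
    have h3 : ∑ i, ‖v.repr x i‖^2 = ∑ i, (v.repr x i)^2 := by
      congr 1; ext i; rw [Real.norm_eq_abs, sq_abs]
    rw [h2, h3] at h1
    rw [← h1, Real.sq_sqrt]
    positivity
  have hfin : ‖T x - S x‖^2 ≤ (ε * ‖x‖)^2 := by
    rw [hnormsq, mul_pow, ← hxnorm, Finset.mul_sum]
    apply Finset.sum_le_sum
    intro i _
    rw [mul_pow]
    have := hsqrtbound i
    have h2 : (Real.sqrt (μ i) - 1)^2 ≤ ε^2 := by
      rw [← sq_abs]
      exact pow_le_pow_left₀ (abs_nonneg _) this 2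
    nlinarith [sq_nonneg (v.repr x i)]
  have h0 : 0 ≤ ε * ‖x‖ := by positivity
  nlinarith [norm_nonneg (T x - S x)]

lemma exists_h_isometry {d : ℕ} {V : Type} [NormedAddCommGroup V] [InnerProductSpace ℝ V]
    (b : OrthonormalBasis (Fin d) ℝ V)
    (h : EuclideanSpace ℝ (Fin (d+1)) →ₗ[ℝ] EuclideanSpace ℝ (Fin (d+1)) →ₗ[ℝ] ℝ)
    (hsym : ∀ v w, h v w = h w v)
    (hpos : ∀ v : EuclideanSpace ℝ (Fin (d+1)), v ≠ 0 → 0 < h v v) :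
    ∃ T : V →ₗ[ℝ] EuclideanSpace ℝ (Fin (d+1)), ∀ v w : V, h (T v) (T w) = ⟪v, w⟫ := by
  have hIsSymm : h.IsSymm := ⟨fun x y => hsym x y⟩
  obtain ⟨u, hu⟩ := LinearMap.BilinForm.exists_orthogonal_basis hIsSymm
  have hcast : d + 1 = Module.finrank ℝ (EuclideanSpace ℝ (Fin (d+1))) :=
    finrank_euclideanSpace_fin.symm
  let g : Fin (Module.finrank ℝ (EuclideanSpace ℝ (Fin (d+1)))) → EuclideanSpace ℝ (Fin (d+1)) :=
    fun i => (Real.sqrt (h (u i) (u i)))⁻¹ • u i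
  have hgg : ∀ i j, h (g i) (g j) = if i = j then (1:ℝ) else 0 := by
    intro i j
    have hpi : 0 < h (u i) (u i) := hpos _ (u.ne_zero i)
    simp only [g, map_smul, LinearMap.smul_apply, smul_eq_mul]
    by_cases hij : i = j
    · subst hij
      rw [if_pos rfl]
      have hs : Real.sqrt (h (u i) (u i)) ^ 2 = h (u i) (u i) := Real.sq_sqrt hpi.le
      have hsne : Real.sqrt (h (u i) (u i)) ≠ 0 := by positivity
      field_simp
      exact hs.symm
    · rw [if_neg hij, hu hij, mul_zero, mul_zero]
  refine ⟨b.toBasis.constr ℝ (fun i => g (Fin.cast hcast i.castSucc)), fun v w => ?_⟩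
  exact constr_bilin b h _ (fun i j => by
    rw [hgg]
    congr 1
    simp [Fin.ext_iff]) v w


/-- Euclidean-coordinate content of the ε-isometric chart comparison.
`(V, g₀)` is a `d`-dimensional inner product space (with `g₀`-orthonormal basis
`b`, modelling `(ℝ^d, g₀)`), and `h` is an inner product on `ℝ^{d+1}` with
`(1+ε)⁻¹ e ≤ h ≤ (1+ε) e`.  For every linear `A : V → ℝ^{d+1}`,
`dist_{g₀,e}(A, O(g₀,e)) ≤ √(1+ε) · dist_{g₀,h}(A, O(g₀,h)) + C ε`, where
`O(g₀,k)` is the set of linear isometries from `(V, g₀)` into `(ℝ^{d+1}, k)`,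
distances are in the Frobenius norm over the `g₀`-orthonormal basis (with the
`k`-norm on the target), and `C = C(d)`. -/
theorem distance_to_isometries_comparison (d : ℕ) :
    ∃ C : ℝ, 0 < C ∧
      ∀ (ε : ℝ), ε ∈ Set.Ioo (0 : ℝ) 1 →
      ∀ (V : Type) [NormedAddCommGroup V] [InnerProductSpace ℝ V]
        (b : OrthonormalBasis (Fin d) ℝ V),
      ∀ (h : EuclideanSpace ℝ (Fin (d + 1)) →ₗ[ℝ] EuclideanSpace ℝ (Fin (d + 1)) →ₗ[ℝ] ℝ),
        (∀ v w, h v w = h w v) →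
        (∀ v : EuclideanSpace ℝ (Fin (d + 1)), ‖v‖ ^ 2 / (1 + ε) ≤ h v v) →
        (∀ v : EuclideanSpace ℝ (Fin (d + 1)), h v v ≤ (1 + ε) * ‖v‖ ^ 2) →
      ∀ A : V →ₗ[ℝ] EuclideanSpace ℝ (Fin (d + 1)),
        sInf ((fun T : V →ₗ[ℝ] EuclideanSpace ℝ (Fin (d + 1)) =>
            Real.sqrt (∑ i, ‖A (b i) - T (b i)‖ ^ 2)) ''
          {T | ∀ v w : V, ⟪T v, T w⟫ = ⟪v, w⟫}) ≤
        Real.sqrt (1 + ε) *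
          sInf ((fun T : V →ₗ[ℝ] EuclideanSpace ℝ (Fin (d + 1)) =>
              Real.sqrt (∑ i, h (A (b i) - T (b i)) (A (b i) - T (b i)))) ''
            {T | ∀ v w : V, h (T v) (T w) = ⟪v, w⟫}) + C * ε := by
  refine ⟨Real.sqrt d + 1, by positivity, ?_⟩
  intro ε hε V _ _ b h hsymm hlo hhi A
  obtain ⟨hε0, hε1⟩ := hε
  set C : ℝ := Real.sqrt d + 1 with hC
  have hone : (0:ℝ) < 1 + ε := by linarith
  have hpos : ∀ v : EuclideanSpace ℝ (Fin (d+1)), v ≠ 0 → 0 < h v v := by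
    intro v hv
    refine lt_of_lt_of_le ?_ (hlo v)
    have : 0 < ‖v‖ := norm_pos_iff.mpr hv
    positivity
  obtain ⟨T₀, hT₀⟩ := exists_h_isometry b h hsymm hpos
  set fE : (V →ₗ[ℝ] EuclideanSpace ℝ (Fin (d + 1))) → ℝ :=
    fun T => Real.sqrt (∑ i, ‖A (b i) - T (b i)‖ ^ 2) with hfE
  set fH : (V →ₗ[ℝ] EuclideanSpace ℝ (Fin (d + 1))) → ℝ :=
    fun T => Real.sqrt (∑ i, h (A (b i) - T (b i)) (A (b i) - T (b i))) with hfH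
  set SE : Set (V →ₗ[ℝ] EuclideanSpace ℝ (Fin (d + 1))) :=
    {T | ∀ v w : V, ⟪T v, T w⟫ = ⟪v, w⟫} with hSE
  set SH : Set (V →ₗ[ℝ] EuclideanSpace ℝ (Fin (d + 1))) :=
    {T | ∀ v w : V, h (T v) (T w) = ⟪v, w⟫} with hSH
  have hbddE : BddBelow (fE '' SE) := by
    refine ⟨0, fun x hx => ?_⟩
    obtain ⟨T, -, rfl⟩ := hx
    exact Real.sqrt_nonneg _
  have hNEh : (fH '' SH).Nonempty := ⟨fH T₀, ⟨T₀, hT₀, rfl⟩⟩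
  have hsq1ε : (0:ℝ) < Real.sqrt (1 + ε) := Real.sqrt_pos.mpr hone
  have key : ∀ y ∈ fH '' SH, sInf (fE '' SE) ≤ Real.sqrt (1 + ε) * y + C * ε := by
    rintro y ⟨T, hT, rfl⟩
    have hnormT : ∀ x : V, h (T x) (T x) = ‖x‖ ^ 2 := by
      intro x
      rw [hT x x, real_inner_self_eq_norm_sq]
    have hlowT : ∀ x : V, ‖x‖ ^ 2 / (1 + ε) ≤ ‖T x‖ ^ 2 := by
      intro x
      have h1 := hhi (T x)
      rw [hnormT] at h1
      rw [div_le_iff₀ hone]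
      linarith
    have hhighT : ∀ x : V, ‖T x‖ ^ 2 ≤ (1 + ε) * ‖x‖ ^ 2 := by
      intro x
      have h1 := hlo (T x)
      rw [hnormT, div_le_iff₀ hone] at h1
      linarith
    obtain ⟨S, hSpres, hSbound⟩ := near_isometry_approx b hε0 hε1 T hlowT hhighT
    have hmem : fE S ∈ fE '' SE := ⟨S, hSpres, rfl⟩
    refine le_trans (csInf_le hbddE hmem) ?_
    -- Minkowski step
    set u : EuclideanSpace ℝ (Fin d) := WithLp.toLp 2 (fun k => ‖A (b k) - T (b k)‖) with hu
    set w : EuclideanSpace ℝ (Fin d) := WithLp.toLp 2 (fun k => ‖T (b k) - S (b k)‖) with hw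
    have hstep1 : fE S ≤ ‖u + w‖ := by
      rw [hfE, EuclideanSpace.norm_eq]
      apply Real.sqrt_le_sqrt
      apply Finset.sum_le_sum
      intro k _
      have htr : ‖A (b k) - S (b k)‖ ≤ ‖A (b k) - T (b k)‖ + ‖T (b k) - S (b k)‖ :=
        norm_sub_le_norm_sub_add_norm_sub _ _ _
      have hnn : (0:ℝ) ≤ ‖A (b k) - T (b k)‖ + ‖T (b k) - S (b k)‖ := by positivity
      calc ‖A (b k) - S (b k)‖ ^ 2 ≤ (‖A (b k) - T (b k)‖ + ‖T (b k) - S (b k)‖) ^ 2 :=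
            pow_le_pow_left₀ (norm_nonneg _) htr 2
        _ = ‖(u + w) k‖ ^ 2 := by
            have : (u + w) k = ‖A (b k) - T (b k)‖ + ‖T (b k) - S (b k)‖ := rfl
            rw [this, Real.norm_eq_abs, sq_abs]
    have hstep2 : ‖u + w‖ ≤ ‖u‖ + ‖w‖ := norm_add_le u w
    have hstepu : ‖u‖ ≤ Real.sqrt (1 + ε) * fH T := by
      rw [EuclideanSpace.norm_eq, hfH]
      rw [← Real.sqrt_mul hone.le]
      apply Real.sqrt_le_sqrt
      rw [Finset.mul_sum]
      apply Finset.sum_le_sum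
      intro k _
      have : ‖u k‖ ^ 2 = ‖A (b k) - T (b k)‖ ^ 2 := by
        rw [Real.norm_eq_abs, sq_abs]
      rw [this]
      have h1 := hlo (A (b k) - T (b k))
      rw [div_le_iff₀ hone] at h1
      linarith
    have hstepw : ‖w‖ ≤ Real.sqrt d * ε := by
      rw [EuclideanSpace.norm_eq]
      have hle : ∑ k : Fin d, ‖w k‖ ^ 2 ≤ ∑ _k : Fin d, ε ^ 2 := by
        apply Finset.sum_le_sum
        intro k _
        have hwk : w k = ‖T (b k) - S (b k)‖ := rfl
        have h1 : ‖T (b k) - S (b k)‖ ≤ ε * ‖b k‖ := hSbound (b k)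
        rw [b.orthonormal.1 k, mul_one] at h1
        rw [hwk, Real.norm_eq_abs, sq_abs]
        exact pow_le_pow_left₀ (norm_nonneg _) h1 2
      have hsum : ∑ _k : Fin d, ε ^ 2 = (d : ℝ) * ε ^ 2 := by
        rw [Finset.sum_const, Finset.card_univ, Fintype.card_fin, nsmul_eq_mul]
      refine le_trans (Real.sqrt_le_sqrt (hsum ▸ hle)) ?_
      rw [Real.sqrt_mul (Nat.cast_nonneg d), Real.sqrt_sq hε0.le]
    have hCd : Real.sqrt d * ε ≤ C * ε := by
      have : Real.sqrt d ≤ C := by rw [hC]; linarith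
      exact mul_le_mul_of_nonneg_right this hε0.le
    calc fE S ≤ ‖u‖ + ‖w‖ := le_trans hstep1 hstep2
      _ ≤ Real.sqrt (1 + ε) * fH T + Real.sqrt d * ε := add_le_add hstepu hstepw
      _ ≤ Real.sqrt (1 + ε) * fH T + C * ε := by linarith
  have hlb : (sInf (fE '' SE) - C * ε) / Real.sqrt (1 + ε) ≤ sInf (fH '' SH) := by
    apply le_csInf hNEh
    intro y hy
    rw [div_le_iff₀ hsq1ε]
    have := key y hy
    nlinarith
  rw [div_le_iff₀ hsq1ε] at hlb
  nlinarith
end
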